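/- If H has a matching covering U, then there exists an assignment (R,σ) for (H',v₀) with σ(v₀) ≠ ⊥. -/
import Mathlib


/-!
Hypergraphs are represented by their incidence graphs: a hypergraph on a (finite) set
`V` of hypervertices and a (finite) set `E` of hyperedges is given by its incidence
relation `Inc : V → E → Prop` (every hyperedge being incident to at least one
hypervertex).
-/

/-- A strong cycle of the hypergraph `Inc`, with `m` (pairwise distinct) hypervertices
`v i` and `m` (pairwise distinct) hyperedges `e i`, indexed cyclically; as a cycle
`v 0, e 0, v 1, e 1, …` of the incidence graph it has length `2m`.  Strongness means
that the subgraph of the incidence graph induced by the entries of the cycle contains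
exactly the consecutive incidences: `v i` is incident to `e j` iff `i = j` or
`i = j + 1`. -/
def IsStrongCycle {V E : Type} (Inc : V → E → Prop) (m : ℕ)
    (v : ZMod m → V) (e : ZMod m → E) : Prop :=
  Function.Injective v ∧ Function.Injective e ∧
    ∀ i j : ZMod m, Inc (v i) (e j) ↔ (i = j ∨ i = j + 1)

/-- The hypergraph `Inc` is balanced: it has no strong cycle of length `4k + 2` for an
integer `k ≥ 1`, i.e. (the incidence graph being bipartite) no strong cycle with an odd
number `m ≥ 3` of hyperedges. -/
def BalancedInc {V E : Type} (Inc : V → E → Prop) : Prop :=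
  ∀ m : ℕ, 3 ≤ m → Odd m → ∀ v : ZMod m → V, ∀ e : ZMod m → E,
    ¬ IsStrongCycle Inc m v e

/-- `M` is a matching of the hypergraph `Inc`: a set of hyperedges splitting `V`, i.e.
every hypervertex is incident to at most one hyperedge of `M`. -/
def IsHyperMatching {V E : Type} (Inc : V → E → Prop) (M : Set E) : Prop :=
  ∀ u : V, {e | e ∈ M ∧ Inc u e}.Subsingleton

/-- `T` is a transversal of the hypergraph `Inc`: a set of hypervertices covering `E`,
i.e. every hyperedge is incident to at least one hypervertex of `T`. -/
def IsHyperTransversal {V E : Type} (Inc : V → E → Prop) (T : Set V) : Prop :=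
  ∀ e : E, ∃ u ∈ T, Inc u e

/-!
Construction of `H'` from a balanced hypergraph `H` (with incidence relation
`Inc : V → E → Prop`) and an independent transversal `U ⊆ V` of `H`: we add two
hypervertices `v₀, v₁`, a hyperedge `e₀` incident exactly to `v₀` and `v₁`, and, for
each `v ∈ U`, a hyperedge `f_v` incident exactly to `v₁` and `v`.  Hypervertices of
`H'` are encoded by `Option (Option V)` (`none` is `v₀`, `some none` is `v₁`,
`some (some v)` is `v ∈ V`) and hyperedges of `H'` by `Option (E ⊕ U)` (`none` is
`e₀`, `some (Sum.inl e)` is `e ∈ E`, `some (Sum.inr v)` is `f_v` for `v ∈ U`).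
-/

/-- The hypervertices of `H'`. -/
abbrev Vh (V : Type) : Type := Option (Option V)

/-- The hyperedges of `H'`. -/
abbrev Eh (V E : Type) (U : Set V) : Type := Option (E ⊕ U)

/-- The added hypervertex `v₀`. -/
def hv0 {V : Type} : Vh V := none

/-- The added hypervertex `v₁`. -/
def hv1 {V : Type} : Vh V := some none

/-- The embedding of a hypervertex of `H` into `H'`. -/
def hemb {V : Type} (v : V) : Vh V := some (some v)

/-- The added hyperedge `e₀`. -/
def he0 {V E : Type} {U : Set V} : Eh V E U := none

/-- The embedding of a hyperedge of `H` into `H'`. -/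
def origE {V E : Type} {U : Set V} (e : E) : Eh V E U := some (Sum.inl e)

/-- The added hyperedge `f_v`, for `v ∈ U`. -/
def fE {V E : Type} {U : Set V} (v : U) : Eh V E U := some (Sum.inr v)

/-- The incidence relation of `H'`. -/
def IncExt {V E : Type} (Inc : V → E → Prop) (U : Set V) : Vh V → Eh V E U → Prop
  | none, none => True
  | some none, none => True
  | some none, some (Sum.inr _) => True
  | some (some u), some (Sum.inr v) => u = (v : V)
  | some (some u), some (Sum.inl e) => Inc u e
  | _, _ => False

/-- `N_σ(u)`: the set of hypervertices `v ≠ u` such that `σ(v)` is a hyperedge incident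
to `u`. -/
def Nsig {A B : Type} (Inc : A → B → Prop) (σ : A → Option B) (u : A) : Set A :=
  {v | v ≠ u ∧ ∃ e, σ v = some e ∧ Inc u e}

/-- `(R, σ)` is an assignment for the hypergraph `Inc` with distinguished hypervertex
`x₀` (here `σ v = none` encodes `σ(v) = ⊥`). -/
structure IsAssignmentH {A B : Type} (Inc : A → B → Prop) (x0 : A)
    (R : Set A) (σ : A → Option B) : Prop where
  /-- `x₀ ∈ R`. -/
  mem : x0 ∈ R
  /-- `(C₁)`: for `v ∈ R`, if `σ v = e ∈ E'` then `e` is incident to `v` and every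
  hypervertex `u ≠ v` incident to `e` satisfies `u ∈ R` and `σ u = ⊥`. -/
  C1 : ∀ v ∈ R, ∀ e, σ v = some e →
    Inc v e ∧ ∀ u, Inc u e → u ≠ v → u ∈ R ∧ σ u = none
  /-- `(C₂)`: for `v ∈ R`, if `σ v = ⊥` then every hyperedge `e` incident to `v` has
  some incident hypervertex `u` with `u ∈ R` and `σ u ≠ ⊥`. -/
  C2 : ∀ v ∈ R, σ v = none → ∀ e, Inc v e → ∃ u, Inc u e ∧ u ∈ R ∧ σ u ≠ none
  /-- `(C₃)`, first half: for `v ∈ R`, `|N_σ(v)| ≤ 1`. -/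
  C3 : ∀ v ∈ R, (Nsig Inc σ v).Subsingleton
  /-- `(C₃)`, second half: `N_σ(x₀) = ∅`. -/
  C3' : Nsig Inc σ x0 = ∅

/-- The list `L = [(v₀, e₀), (v₁, e₁), …]` (in path order) is a strong path
`v₀ e₀ v₁ e₁ …` of the hypergraph `Inc`: its hypervertices are pairwise distinct, its
hyperedges are pairwise distinct, and the subgraph of the incidence graph induced by
its entries contains exactly the consecutive incidences, i.e. `v i` is incident to
`e j` iff `i = j` or `i = j + 1`. -/
def IsStrongPathL {A B : Type} (Inc : A → B → Prop) (L : List (A × B)) : Prop :=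
  (L.map Prod.fst).Nodup ∧ (L.map Prod.snd).Nodup ∧
    ∀ (i j : ℕ) (hi : i < L.length) (hj : j < L.length),
      (Inc (L.get ⟨i, hi⟩).1 (L.get ⟨j, hj⟩).2 ↔ (i = j ∨ i = j + 1))

/-- Auxiliary fuelled definition of the game value of the game `𝒢(H', v₀)`.  A position
is a strong path `v₀ e₀ v₁ e₁ … v_k e_k`, stored as the list `P` of its pairs
`(v_i, e_i)` in *reverse* order (head `= (v_k, e_k)`); the player to move must choose a
hypervertex `v` and a hyperedge `e` such that the extended sequence is again a strong
path; a position is a win for the player to move iff some legal move leads to a loss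
for the player to move there.  The fuel is (an upper bound on) the number of unused
hypervertices, which decreases by one at each move, so that with fuel equal to the
number of unused hypervertices this is exactly the well-founded definition of the game
value. -/
def winAuxH {A B : Type} (Inc : A → B → Prop) : ℕ → List (A × B) → Prop
  | 0, _ => False
  | n + 1, P => ∃ v e, IsStrongPathL Inc (((v, e) :: P).reverse) ∧
      ¬ winAuxH Inc n ((v, e) :: P)

/-- The position of `𝒢(H', v₀)` given by the strong path whose pairs, in reverse order,
form the list `P`, is a win for the player to move. -/
def WinPosH {A B : Type} [Fintype A] (Inc : A → B → Prop) (P : List (A × B)) : Prop :=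
  winAuxH Inc {a : A | a ∉ P.map Prod.fst}.ncard P

/-- Proposition 6 (1): let `H` be a balanced hypergraph with an independent transversal
`U`.  If `H` has a matching covering `U`, then there exists an assignment `(R, σ)` for
`(H', v₀)` with `σ(v₀) ≠ ⊥`. -/
theorem stmt14 {V E : Type} [Fintype V] [Fintype E]
    (Inc : V → E → Prop) (U : Set V)
    (hbal : BalancedInc Inc)
    (hUcov : ∀ e : E, ∃ u ∈ U, Inc u e)
    (hUsplit : ∀ e : E, {u | u ∈ U ∧ Inc u e}.Subsingleton)
    (hM : ∃ M : Set E, IsHyperMatching Inc M ∧ ∀ u ∈ U, ∃ e ∈ M, Inc u e) :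
    ∃ (R : Set (Vh V)) (σ : Vh V → Option (Eh V E U)),
      IsAssignmentH (IncExt Inc U) hv0 R σ ∧ σ hv0 ≠ none := by
  classical
  obtain ⟨M, hMm, hMc⟩ := hM
  choose eM heMM heMI using fun u : U => hMc u u.2
  set σ : Vh V → Option (Eh V E U) := fun v => match v with
    | none => some he0
    | some none => none
    | some (some u) => if h : u ∈ U then some (origE (eM ⟨u, h⟩)) else none
    with hσ
  have hσ0 : σ hv0 = some he0 := rfl
  have hσ1 : σ hv1 = none := rfl
  have hσU : ∀ (u : V) (h : u ∈ U), σ (hemb u) = some (origE (eM ⟨u, h⟩)) := by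
    intro u h; simp only [hσ, hemb, dif_pos h]
  have hσnU : ∀ u : V, u ∉ U → σ (hemb u) = none := by
    intro u h; simp only [hσ, hemb, dif_neg h]
  refine ⟨Set.univ, σ, ⟨trivial, ?_, ?_, ?_, ?_⟩, by simp [hσ0, he0]⟩
  · -- C1
    rintro v - e hve
    match v with
    | some none => simp [hσ] at hve
    | none =>
      have he : e = he0 := by simpa [hσ, he0] using hve.symm
      subst he
      refine ⟨trivial, ?_⟩
      rintro u hu hune
      match u with
      | none => exact absurd rfl hune
      | some none => exact ⟨trivial, rfl⟩
      | some (some x) => exact absurd hu (by simp [IncExt, he0])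
    | some (some x) =>
      by_cases hx : x ∈ U
      · have he : e = origE (eM ⟨x, hx⟩) := by
          have := (hσU x hx).symm.trans hve
          simpa using this.symm
        subst he
        refine ⟨heMI ⟨x, hx⟩, ?_⟩
        rintro u hu hune
        match u with
        | none => exact absurd hu (by simp [IncExt, origE])
        | some none => exact absurd hu (by simp [IncExt, origE])
        | some (some y) =>
          have hinc : Inc y (eM ⟨x, hx⟩) := hu
          have hyne : y ≠ x := by
            intro h; exact hune (by rw [h])
          refine ⟨trivial, ?_⟩
          by_cases hy : y ∈ U
          · exact absurd (hUsplit (eM ⟨x, hx⟩) ⟨hy, hinc⟩ ⟨hx, heMI ⟨x, hx⟩⟩) hyne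
          · exact hσnU y hy
      · simp [hσ, dif_neg hx] at hve
  · -- C2
    rintro v - hv e he
    match v with
    | none => simp [hσ] at hv
    | some none =>
      match e with
      | none => exact ⟨none, trivial, trivial, by simp [hσ]⟩
      | some (Sum.inl e') => exact absurd he (by simp [IncExt])
      | some (Sum.inr w) =>
        refine ⟨some (some (w : V)), rfl, trivial, ?_⟩
        rw [show (some (some (w:V)) : Vh V) = hemb (w:V) from rfl, hσU (w : V) w.2]; simp
    | some (some x) =>
      have hx : x ∉ U := by
        intro h
        rw [show (some (some x) : Vh V) = hemb x from rfl, hσU x h] at hv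
        simp at hv
      match e with
      | none => exact absurd he (by simp [IncExt])
      | some (Sum.inr w) =>
        have : x = (w : V) := he
        exact absurd (this ▸ w.2) hx
      | some (Sum.inl e') =>
        obtain ⟨u, hu, hinc⟩ := hUcov e'
        refine ⟨some (some u), hinc, trivial, ?_⟩
        rw [show (some (some u) : Vh V) = hemb u from rfl, hσU u hu]; simp
  · -- C3
    rintro v -
    have key : ∀ a ∈ Nsig (IncExt Inc U) σ v,
        (v = hv1 ∧ a = hv0) ∨
        (∃ (y : V) (hy : y ∈ U), a = hemb y ∧ IncExt Inc U v (origE (eM ⟨y, hy⟩))) := by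
      rintro a ⟨hane, e, hae, hinc⟩
      match a with
      | none =>
        have he : e = he0 := by simpa [hσ, he0] using hae.symm
        subst he
        match v with
        | none => exact absurd rfl hane
        | some none => exact Or.inl ⟨rfl, rfl⟩
        | some (some x) => exact absurd hinc (by simp [IncExt, he0])
      | some none => simp [hσ] at hae
      | some (some y) =>
        by_cases hy : y ∈ U
        · have he : e = origE (eM ⟨y, hy⟩) := by
            have := (hσU y hy).symm.trans hae
            simpa using this.symm
          subst he
          exact Or.inr ⟨y, hy, rfl, hinc⟩
        · simp [hσ, dif_neg hy] at hae
    rintro a ha b hb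
    rcases key a ha with ⟨hv, ha'⟩ | ⟨y, hy, ha', hincy⟩ <;>
      rcases key b hb with ⟨hv', hb'⟩ | ⟨z, hz, hb', hincz⟩
    · rw [ha', hb']
    · subst hv
      exact absurd hincz (by simp [IncExt, origE, hv1])
    · subst hv'
      exact absurd hincy (by simp [IncExt, origE, hv1])
    · match v with
      | none => exact absurd hincy (by simp [IncExt, origE])
      | some none => exact absurd hincy (by simp [IncExt, origE, hv1])
      | some (some x) =>
        have h1 : Inc x (eM ⟨y, hy⟩) := hincy
        have h2 : Inc x (eM ⟨z, hz⟩) := hincz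
        have heq : eM ⟨y, hy⟩ = eM ⟨z, hz⟩ :=
          hMm x ⟨heMM ⟨y, hy⟩, h1⟩ ⟨heMM ⟨z, hz⟩, h2⟩
        have hyz : y = z := by
          have := hUsplit (eM ⟨y, hy⟩) ⟨hy, heMI ⟨y, hy⟩⟩ ⟨hz, heq ▸ heMI ⟨z, hz⟩⟩
          exact this
        rw [ha', hb', hyz]
  · -- C3'
    ext a
    simp only [Set.mem_empty_iff_false, iff_false]
    rintro ⟨hane, e, hae, hinc⟩
    match a with
    | none => exact hane rfl
    | some none => simp [hσ] at hae
    | some (some y) =>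
      by_cases hy : y ∈ U
      · have he : e = origE (eM ⟨y, hy⟩) := by
          have := (hσU y hy).symm.trans hae
          simpa using this.symm
        subst he
        exact absurd hinc (by simp [IncExt, origE, hv0])
      · simp [hσ, dif_neg hy] at hae
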